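/- arXiv:cs/0604107 — 4 statements merged into one kernel-verified Lean document; each statement's English description precedes it below -/
import Mathlib

section
/- For real parameters $P_p > 0$, $P_c > 0$ and $0 < a \le 1$, the value $\alpha^* = \left(\frac{\sqrt{P_p}(\sqrt{1+a^2 P_c(1+P_p)}-1)}{a\sqrt{P_c}(1+P_p)}\right)^{1/2}$ lies in the interval $[0,1]$. -/
open Real

/-!
Subadditivity of the square root gives `√(1 + a²P_c(1 + P_p)) - 1 ≤ a √P_c √(1 + P_p)`, so the
radicand of `α*` is at most `√P_p √(1 + P_p) / (1 + P_p) = √(P_p / (1 + P_p)) ≤ 1`.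
-/

lemma Real.sqrt_add_le_sqrt_add_sqrt {x y : ℝ} (hx : 0 ≤ x) (hy : 0 ≤ y) :
    √(x + y) ≤ √x + √y := by
  rw [Real.sqrt_le_left (by positivity), add_sq, Real.sq_sqrt hx, Real.sq_sqrt hy]
  nlinarith [mul_nonneg (Real.sqrt_nonneg x) (Real.sqrt_nonneg y)]

lemma Real.sqrt_mul_sqrt_le_of_le {x y : ℝ} (hxy : x ≤ y) (hy : 0 ≤ y) : √x * √y ≤ y :=
  calc √x * √y ≤ √y * √y := by gcongr
    _ = y := Real.mul_self_sqrt hy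

theorem alphaStar_mem_Icc_general (Pp Pc a : ℝ) (hPp : 0 < Pp) (hPc : 0 < Pc)
    (ha : 0 < a) :
    Real.sqrt (Real.sqrt Pp * (Real.sqrt (1 + a ^ 2 * Pc * (1 + Pp)) - 1)
      / (a * Real.sqrt Pc * (1 + Pp))) ∈ Set.Icc (0 : ℝ) 1 := by
  have h1Pp : 0 < 1 + Pp := by linarith
  have hsqrt_radicand : √(a ^ 2 * Pc * (1 + Pp)) = a * √Pc * √(1 + Pp) := by
    rw [Real.sqrt_mul (by positivity), Real.sqrt_mul (by positivity), Real.sqrt_sq ha.le]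
  have hsub : √(1 + a ^ 2 * Pc * (1 + Pp)) - 1 ≤ a * √Pc * √(1 + Pp) := by
    have := Real.sqrt_add_le_sqrt_add_sqrt zero_le_one (by positivity : 0 ≤ a ^ 2 * Pc * (1 + Pp))
    rw [Real.sqrt_one, hsqrt_radicand] at this
    linarith
  refine ⟨Real.sqrt_nonneg _, ?_⟩
  rw [Real.sqrt_le_one, div_le_one (by positivity)]
  calc √Pp * (√(1 + a ^ 2 * Pc * (1 + Pp)) - 1)
      ≤ √Pp * (a * √Pc * √(1 + Pp)) := by gcongr
    _ = a * √Pc * (√Pp * √(1 + Pp)) := by ring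
    _ ≤ a * √Pc * (1 + Pp) := by
        gcongr
        exact Real.sqrt_mul_sqrt_le_of_le (by linarith) h1Pp.le

theorem alphaStar_mem_Icc (Pp Pc a : ℝ) (hPp : 0 < Pp) (hPc : 0 < Pc)
    (ha : 0 < a) (ha1 : a ≤ 1) :
    Real.sqrt (Real.sqrt Pp * (Real.sqrt (1 + a ^ 2 * Pc * (1 + Pp)) - 1)
      / (a * Real.sqrt Pc * (1 + Pp))) ∈ Set.Icc (0 : ℝ) 1 :=
  alphaStar_mem_Icc_general Pp Pc a hPp hPc ha
end

section
/- Fix $P_p > 0$, $P_c > 0$, $a > 0$. Define $g(\alpha) = \frac{(\sqrt{P_p}+a\sqrt{\alpha P_c})^2}{1+a^2(1-\alpha)P_c}$ for $\alpha \in [0,1]$. Then $g$ is strictly increasing on $[0,1]$. -/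
open Real

/-! The numerator grows strictly with `α` because `√` does, while the denominator shrinks and
stays positive on `[0, 1]`. -/

theorem StrictMonoOn.div_of_antitoneOn {α 𝕜 : Type*} [Preorder α] [Field 𝕜] [LinearOrder 𝕜]
    [IsStrictOrderedRing 𝕜] {s : Set α} {f g : α → 𝕜} (hf : StrictMonoOn f s)
    (hg : AntitoneOn g s) (hf₀ : ∀ x ∈ s, 0 ≤ f x) (hg₀ : ∀ x ∈ s, 0 < g x) :
    StrictMonoOn (fun x => f x / g x) s := by
  intro x hx y hy hxy
  calc f x / g x ≤ f x / g y := div_le_div_of_nonneg_left (hf₀ x hx) (hg₀ y hy) (hg hx hy hxy.le)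
    _ < f y / g y := div_lt_div_of_pos_right (hf hx hy hxy) (hg₀ y hy)

theorem strictMonoOn_sq_sqrt_add_mul_sqrt_mul (b a c : ℝ) (ha : 0 < a) (hc : 0 < c) :
    StrictMonoOn (fun α : ℝ => (√b + a * √(α * c)) ^ 2) (Set.Ici 0) := by
  intro x hx y _ hxy
  have hsqrt : √(x * c) < √(y * c) :=
    Real.sqrt_lt_sqrt (mul_nonneg hx hc.le) (mul_lt_mul_of_pos_right hxy hc)
  have hbase : √b + a * √(x * c) < √b + a * √(y * c) := by gcongr
  exact pow_lt_pow_left₀ hbase (by positivity) two_ne_zero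

theorem antitone_one_add_mul_one_sub_mul (a c : ℝ) (hc : 0 ≤ c) :
    Antitone (fun α : ℝ => 1 + a ^ 2 * (1 - α) * c) := by
  intro x y hxy
  have : 0 ≤ a ^ 2 * c := by positivity
  nlinarith

theorem one_add_mul_one_sub_mul_pos {a c α : ℝ} (hc : 0 ≤ c) (hα : α ≤ 1) :
    0 < 1 + a ^ 2 * (1 - α) * c := by
  have : 0 ≤ 1 - α := sub_nonneg.2 hα
  positivity

theorem sinr_strictMonoOn_general (Pp Pc a : ℝ) (hPc : 0 < Pc) (ha : 0 < a) :
    StrictMonoOn (fun α : ℝ =>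
      (Real.sqrt Pp + a * Real.sqrt (α * Pc)) ^ 2 / (1 + a ^ 2 * (1 - α) * Pc))
      (Set.Icc (0 : ℝ) 1) :=
  ((strictMonoOn_sq_sqrt_add_mul_sqrt_mul Pp a Pc ha hPc).mono
      Set.Icc_subset_Ici_self).div_of_antitoneOn
    ((antitone_one_add_mul_one_sub_mul a Pc hPc.le).antitoneOn _)
    (fun _ _ => sq_nonneg _) (fun _ hα => one_add_mul_one_sub_mul_pos hPc.le hα.2)

theorem sinr_strictMonoOn (Pp Pc a : ℝ) (hPp : 0 < Pp) (hPc : 0 < Pc) (ha : 0 < a) :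
    StrictMonoOn (fun α : ℝ =>
      (Real.sqrt Pp + a * Real.sqrt (α * Pc)) ^ 2 / (1 + a ^ 2 * (1 - α) * Pc))
      (Set.Icc (0 : ℝ) 1) :=
  sinr_strictMonoOn_general Pp Pc a hPc ha
end

section
/- Let $P_p, P_c > 0$, $a \ge 1$, and $\mu \ge 1$. Then $\max_{0\le\alpha\le 1} \left[\frac{\mu}{2}\log\left(1+\frac{(\sqrt{P_p}+a\sqrt{\alpha P_c})^2}{1+a^2(1-\alpha)P_c}\right) + \frac{1}{2}\log(1+(1-\alpha)P_c)\right] = \frac{\mu}{2}\log\left(1+(\sqrt{P_p}+a\sqrt{P_c})^2\right)$, and the maximum is attained at $\alpha = 1$. -/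
/-!
Write `S α = (√Pp + a√(αPc))² / (1 + a²(1-α)Pc)` for the signal-to-interference ratio and
`Y = 1 + (√Pp + a√Pc)²` for the argument of the logarithm at `α = 1`. Moving power `(1-α)Pc` from cooperation to the
private message increases the interference term `a²(1-α)Pc` at least as fast as the private rate
term `(1-α)Pc`, because `a ≥ 1`; this gives `(1 + S α)(1 + (1-α)Pc) ≤ Y`. Since also `1 + S α ≤ Y`,
splitting `μ = (μ - 1) + 1` bounds the weighted sum by `μ/2 · log Y`.
-/

open Real

lemma mul_log_add_log_le_mul_log {μ x y z : ℝ} (hμ : 1 ≤ μ) (hx : 1 ≤ x) (hz : 1 ≤ z)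
    (hxzy : x * z ≤ y) :
    μ * log x + log z ≤ μ * log y := by
  have hx0 : 0 < x := by linarith
  have hz0 : 0 < z := by linarith
  have hxy : x ≤ y := le_trans (le_mul_of_one_le_right hx0.le hz) hxzy
  have hlog_xy : log x ≤ log y := log_le_log hx0 hxy
  have hlog_xzy : log x + log z ≤ log y := by
    rw [← log_mul hx0.ne' hz0.ne']
    exact log_le_log (by positivity) hxzy
  nlinarith [mul_le_mul_of_nonneg_left hlog_xy (by linarith : 0 ≤ μ - 1)]

lemma one_add_div_mul_one_add_le {s t u a c : ℝ} (hs : 0 ≤ s) (ha : 1 ≤ a) (hc : 0 ≤ c)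
    (htu : t ≤ u) (hcu : t ^ 2 + c = u ^ 2) :
    (1 + (s + a * t) ^ 2 / (1 + a ^ 2 * c)) * (1 + c) ≤ 1 + (s + a * u) ^ 2 := by
  have hc_le : c ≤ a ^ 2 * c := le_mul_of_one_le_left hc (by nlinarith)
  have hD : 0 < 1 + a ^ 2 * c := by linarith
  -- `(s + a u)² - (s + a t)² = 2 a s (u - t) + a² c`
  have hnum : 1 + a ^ 2 * c + (s + a * t) ^ 2 ≤ 1 + (s + a * u) ^ 2 := by
    nlinarith [mul_nonneg (mul_nonneg (by linarith : 0 ≤ a) hs) (sub_nonneg.2 htu)]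
  calc (1 + (s + a * t) ^ 2 / (1 + a ^ 2 * c)) * (1 + c)
      = (1 + a ^ 2 * c + (s + a * t) ^ 2) * (1 + c) / (1 + a ^ 2 * c) := by
        field_simp
    _ ≤ (1 + (s + a * u) ^ 2) * (1 + a ^ 2 * c) / (1 + a ^ 2 * c) := by
        gcongr
    _ = 1 + (s + a * u) ^ 2 := mul_div_cancel_right₀ _ hD.ne'

theorem sum_capacity_lemma_general (Pp Pc a μ : ℝ) (hPc : 0 < Pc)
    (ha : 1 ≤ a) (hμ : 1 ≤ μ) :
    (∀ α ∈ Set.Icc (0 : ℝ) 1,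
      (μ / 2) * Real.log (1 +
          (Real.sqrt Pp + a * Real.sqrt (α * Pc)) ^ 2 / (1 + a ^ 2 * (1 - α) * Pc))
        + (1 / 2) * Real.log (1 + (1 - α) * Pc)
      ≤ (μ / 2) * Real.log (1 + (Real.sqrt Pp + a * Real.sqrt Pc) ^ 2)) ∧
    (μ / 2) * Real.log (1 +
        (Real.sqrt Pp + a * Real.sqrt ((1 : ℝ) * Pc)) ^ 2 / (1 + a ^ 2 * (1 - 1) * Pc))
      + (1 / 2) * Real.log (1 + (1 - 1) * Pc)
    = (μ / 2) * Real.log (1 + (Real.sqrt Pp + a * Real.sqrt Pc) ^ 2) := by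
  refine ⟨fun α ⟨hα0, hα1⟩ => ?_, by norm_num⟩
  have hc : 0 ≤ (1 - α) * Pc := mul_nonneg (by linarith) hPc.le
  have hprod := one_add_div_mul_one_add_le (t := sqrt (α * Pc)) (u := sqrt Pc)
    (sqrt_nonneg Pp) ha hc (sqrt_le_sqrt (by nlinarith))
    (by rw [sq_sqrt (by positivity), sq_sqrt hPc.le]; ring)
  have hratio : 1 ≤ 1 + (sqrt Pp + a * sqrt (α * Pc)) ^ 2 / (1 + a ^ 2 * ((1 - α) * Pc)) :=
    le_add_of_nonneg_right (by positivity)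
  have key := mul_log_add_log_le_mul_log hμ hratio (by linarith [hc]) hprod
  rw [mul_assoc (a ^ 2)]
  linarith

theorem sum_capacity_lemma (Pp Pc a μ : ℝ) (hPp : 0 < Pp) (hPc : 0 < Pc)
    (ha : 1 ≤ a) (hμ : 1 ≤ μ) :
    (∀ α ∈ Set.Icc (0 : ℝ) 1,
      (μ / 2) * Real.log (1 +
          (Real.sqrt Pp + a * Real.sqrt (α * Pc)) ^ 2 / (1 + a ^ 2 * (1 - α) * Pc))
        + (1 / 2) * Real.log (1 + (1 - α) * Pc)
      ≤ (μ / 2) * Real.log (1 + (Real.sqrt Pp + a * Real.sqrt Pc) ^ 2)) ∧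
    (μ / 2) * Real.log (1 +
        (Real.sqrt Pp + a * Real.sqrt ((1 : ℝ) * Pc)) ^ 2 / (1 + a ^ 2 * (1 - 1) * Pc))
      + (1 / 2) * Real.log (1 + (1 - 1) * Pc)
    = (μ / 2) * Real.log (1 + (Real.sqrt Pp + a * Real.sqrt Pc) ^ 2) :=
  sum_capacity_lemma_general Pp Pc a μ hPc ha hμ
end

section
/- Let $P_p, P_c > 0$ and $0 < a \le 1$, and let $\alpha^* \in [0,1]$ be the unique solution of $\frac{(\sqrt{P_p}+a\sqrt{\alpha P_c})^2}{1+a^2(1-\alpha)P_c} = P_p$ on $[0,1]$. Then the point $(R_p^*, R_c^*) = \left(\frac{1}{2}\log(1+P_p),\ \frac{1}{2}\log(1+(1-\alpha^*)P_c)\right)$ lies in the region $\bigcup_{\alpha\in[0,1]}\{(R_p,R_c): 0 \le R_p \le \frac{1}{2}\log(1+\frac{(\sqrt{P_p}+a\sqrt{\alpha P_c})^2}{1+a^2(1-\alpha)P_c}),\ 0 \le R_c \le \frac{1}{2}\log(1+(1-\alpha)P_c)\}$, and moreover for every $(R_p, R_c)$ in this region with $R_p \ge \frac{1}{2}\log(1+P_p)$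 one has $R_c \le R_c^*$. -/
/-!
The primary user's SNR `(√Pp + a √(α Pc))² / (1 + a² (1 - α) Pc)` is strictly increasing in `α`
on `[0, 1]`, while the cognitive user's SNR `(1 - α) Pc` is decreasing. Hence a point of the
region with `Rp ≥ ½ log (1 + Pp)` must come from some `α ≥ α*` (where the primary SNR equals
`Pp`), and its cognitive rate is at most `½ log (1 + (1 - α*) Pc)`.
-/

open Real

lemma half_mul_log_one_add_le_iff {x y : ℝ} (hx : -1 < x) (hy : -1 < y) :
    1 / 2 * log (1 + x) ≤ 1 / 2 * log (1 + y) ↔ x ≤ y := by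
  rw [mul_le_mul_iff_right₀ (by norm_num), log_le_log_iff (by linarith) (by linarith)]
  exact add_le_add_iff_left 1

lemma strictMonoOn_primary_snr (P : ℝ) {Pc a : ℝ} (hPc : 0 < Pc) (ha : 0 < a) :
    StrictMonoOn (fun α => (√P + a * √(α * Pc)) ^ 2 / (1 + a ^ 2 * (1 - α) * Pc))
      (Set.Icc 0 1) := by
  intro α hα β hβ hlt
  have hβ1 : 0 ≤ 1 - β := by linarith [hβ.2]
  apply div_lt_div₀ _ (by gcongr) (by positivity) (by positivity)
  have hsqrt : √(α * Pc) < √(β * Pc) :=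
    sqrt_lt_sqrt (mul_nonneg hα.1 hPc.le) (mul_lt_mul_of_pos_right hlt hPc)
  gcongr

theorem cognitive_capacity_on_boundary_general (Pp Pc a αs : ℝ) (hPp : 0 < Pp) (hPc : 0 < Pc)
    (ha : 0 < a)
    (hαs : αs ∈ Set.Icc (0 : ℝ) 1)
    (hroot : (Real.sqrt Pp + a * Real.sqrt (αs * Pc)) ^ 2
        / (1 + a ^ 2 * (1 - αs) * Pc) = Pp) :
    let region : Set (ℝ × ℝ) := {R | ∃ α ∈ Set.Icc (0 : ℝ) 1,
      0 ≤ R.1 ∧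
      R.1 ≤ (1 / 2) * Real.log (1 +
        (Real.sqrt Pp + a * Real.sqrt (α * Pc)) ^ 2 / (1 + a ^ 2 * (1 - α) * Pc)) ∧
      0 ≤ R.2 ∧ R.2 ≤ (1 / 2) * Real.log (1 + (1 - α) * Pc)}
    ((1 / 2) * Real.log (1 + Pp), (1 / 2) * Real.log (1 + (1 - αs) * Pc)) ∈ region ∧
    ∀ R ∈ region, (1 / 2) * Real.log (1 + Pp) ≤ R.1 →
      R.2 ≤ (1 / 2) * Real.log (1 + (1 - αs) * Pc) := by
  intro region
  have hαs1 : 0 ≤ 1 - αs := by linarith [hαs.2]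
  refine ⟨⟨αs, hαs, ?_, hroot.symm ▸ le_rfl, ?_, le_rfl⟩, ?_⟩
  · exact mul_nonneg (by norm_num) (log_nonneg (by linarith))
  · exact mul_nonneg (by norm_num) (log_nonneg (by nlinarith))
  rintro ⟨Rp, Rc⟩ ⟨α, hα, -, hRp, -, hRc⟩ hRp_ge
  have hα1 : 0 ≤ 1 - α := by linarith [hα.2]
  have hαs_le : αs ≤ α := by
    by_contra! hlt
    have hsnr_lt := strictMonoOn_primary_snr Pp hPc ha hα hαs hlt
    have hsnr_ge := (half_mul_log_one_add_le_iff (by linarith)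
      (neg_one_lt_zero.trans_le (by positivity))).1 (hRp_ge.trans hRp)
    simp only [hroot] at hsnr_lt
    linarith
  refine hRc.trans ((half_mul_log_one_add_le_iff
    (neg_one_lt_zero.trans_le (by positivity)) (neg_one_lt_zero.trans_le (by positivity))).2 ?_)
  gcongr

theorem cognitive_capacity_on_boundary (Pp Pc a αs : ℝ) (hPp : 0 < Pp) (hPc : 0 < Pc)
    (ha : 0 < a) (ha1 : a ≤ 1)
    (hαs : αs ∈ Set.Icc (0 : ℝ) 1)
    (hroot : (Real.sqrt Pp + a * Real.sqrt (αs * Pc)) ^ 2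
        / (1 + a ^ 2 * (1 - αs) * Pc) = Pp)
    (huniq : ∀ α ∈ Set.Icc (0 : ℝ) 1,
      (Real.sqrt Pp + a * Real.sqrt (α * Pc)) ^ 2 / (1 + a ^ 2 * (1 - α) * Pc) = Pp
        → α = αs) :
    let region : Set (ℝ × ℝ) := {R | ∃ α ∈ Set.Icc (0 : ℝ) 1,
      0 ≤ R.1 ∧
      R.1 ≤ (1 / 2) * Real.log (1 +
        (Real.sqrt Pp + a * Real.sqrt (α * Pc)) ^ 2 / (1 + a ^ 2 * (1 - α) * Pc)) ∧
      0 ≤ R.2 ∧ R.2 ≤ (1 / 2) * Real.log (1 + (1 - α) * Pc)}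
    ((1 / 2) * Real.log (1 + Pp), (1 / 2) * Real.log (1 + (1 - αs) * Pc)) ∈ region ∧
    ∀ R ∈ region, (1 / 2) * Real.log (1 + Pp) ≤ R.1 →
      R.2 ≤ (1 / 2) * Real.log (1 + (1 - αs) * Pc) :=
  cognitive_capacity_on_boundary_general Pp Pc a αs hPp hPc ha hαs hroot
end
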